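/- Let X be a square-integrable real random variable on a probability space, and let 𝒢₁ ⊆ 𝒢₂ be sub-σ-algebras. Then Var(X − E[X|𝒢₂] + E[X|𝒢₁]) = Var(X) − Var(E[X|𝒢₂]) + Var(E[X|𝒢₁]) ≤ Var(X), whenever Var(E[X|𝒢₂]) ≥ Var(E[X|𝒢₁]). -/

import Mathlib

/-!
Write `Eᵢ = μ[X|mᵢ]`. The residual `X - E₂` is orthogonal in `L²` to every square-integrable
`m₂`-measurable variable `Y`, because pulling `Y` out of the conditional expectation gives
`E[X Y] = E[E₂ Y]`; since `m₁ ≤ m₂`, both `E₂` and `E₁` are such variables. Hence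
`Var X = Var (X - E₂) + Var E₂` and `Var (X - E₂ + E₁) = Var (X - E₂) + Var E₁`.
-/

open MeasureTheory ProbabilityTheory

namespace ProbabilityTheory

variable {Ω : Type*} {m mΩ : MeasurableSpace Ω} {μ : Measure Ω} {X Y : Ω → ℝ}

lemma integral_sub_condExp_mul_eq_zero [IsFiniteMeasure μ] (hm : m ≤ mΩ)
    (hX : MemLp X 2 μ) (hY : MemLp Y 2 μ) (hYm : StronglyMeasurable[m] Y) :
    ∫ ω, (X ω - μ[X|m] ω) * Y ω ∂μ = 0 := by
  have pull_out : ∫ ω, X ω * Y ω ∂μ = ∫ ω, μ[X|m] ω * Y ω ∂μ :=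
    calc ∫ ω, X ω * Y ω ∂μ = ∫ ω, μ[X * Y|m] ω ∂μ := (integral_condExp hm).symm
      _ = ∫ ω, μ[X|m] ω * Y ω ∂μ := integral_congr_ae <|
          condExp_mul_of_stronglyMeasurable_right hYm (hX.integrable_mul hY)
            (hX.integrable one_le_two)
  simp_rw [sub_mul]
  exact (integral_sub (hX.integrable_mul hY) ((hX.condExp one_le_two).integrable_mul hY)).trans
    (sub_eq_zero.mpr pull_out)

lemma covariance_sub_condExp_eq_zero [IsFiniteMeasure μ] (hm : m ≤ mΩ) (hX : MemLp X 2 μ)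
    (hY : MemLp Y 2 μ) (hYm : StronglyMeasurable[m] Y) :
    cov[X - μ[X|m], Y; μ] = 0 := by
  have mean_eq_zero : μ[X - μ[X|m]] = 0 := by
    rw [integral_sub' (hX.integrable one_le_two) integrable_condExp, integral_condExp hm, sub_self]
  rw [covariance, mean_eq_zero]
  simpa only [Pi.sub_apply, sub_zero] using
    integral_sub_condExp_mul_eq_zero hm hX (hY.sub (memLp_const μ[Y]))
      (hYm.sub stronglyMeasurable_const)

lemma variance_sub_condExp_add [IsFiniteMeasure μ] (hm : m ≤ mΩ) (hX : MemLp X 2 μ)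
    (hY : MemLp Y 2 μ) (hYm : StronglyMeasurable[m] Y) :
    Var[X - μ[X|m] + Y; μ] = Var[X - μ[X|m]; μ] + Var[Y; μ] := by
  rw [variance_add (hX.sub (hX.condExp one_le_two)) hY,
    covariance_sub_condExp_eq_zero hm hX hY hYm, mul_zero, add_zero]

lemma variance_sub_condExp [IsFiniteMeasure μ] (hm : m ≤ mΩ) (hX : MemLp X 2 μ) :
    Var[X - μ[X|m]; μ] = Var[X; μ] - Var[μ[X|m]; μ] := by
  have h := variance_sub_condExp_add hm hX (hX.condExp one_le_two) stronglyMeasurable_condExp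
  rw [sub_add_cancel] at h
  linarith

end ProbabilityTheory

theorem stmt_2 {Ω : Type*} {mΩ : MeasurableSpace Ω} (μ : Measure Ω) [IsProbabilityMeasure μ]
    (m1 m2 : MeasurableSpace Ω) (h12 : m1 ≤ m2) (h2 : m2 ≤ mΩ)
    (X : Ω → ℝ) (hX : MemLp X 2 μ)
    (hvar : variance (μ[X|m1]) μ ≤ variance (μ[X|m2]) μ) :
    variance (fun ω => X ω - (μ[X|m2]) ω + (μ[X|m1]) ω) μ =
      variance X μ - variance (μ[X|m2]) μ + variance (μ[X|m1]) μ ∧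
    variance (fun ω => X ω - (μ[X|m2]) ω + (μ[X|m1]) ω) μ ≤ variance X μ := by
  have variance_eq : Var[X - μ[X|m2] + μ[X|m1]; μ] = Var[X; μ] - Var[μ[X|m2]; μ] + Var[μ[X|m1]; μ] := by
    rw [variance_sub_condExp_add h2 hX (hX.condExp one_le_two)
      (stronglyMeasurable_condExp.mono h12), variance_sub_condExp h2 hX]
  change Var[X - μ[X|m2] + μ[X|m1]; μ] = _ ∧ Var[X - μ[X|m2] + μ[X|m1]; μ] ≤ _
  exact ⟨variance_eq, by linarith⟩
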